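/- For all real numbers φ, ψ with ψ − φ not an integer multiple of π, the point p(φ,ψ) lies on both lines ℓ_φ and ℓ_ψ, and it is their unique common point. -/
import Mathlib


open Real

/-- The tangent line `ℓ_φ = {e^{-2iφ} + t e^{iφ} : t ∈ ℝ}` of the deltoid. -/
noncomputable def tline (φ : ℝ) : Set ℂ :=
  {w : ℂ | ∃ t : ℝ, w = Complex.exp (((-(2 * φ) : ℝ) : ℂ) * Complex.I) +
      (t : ℂ) * Complex.exp ((φ : ℂ) * Complex.I)}

/-- The intersection point `p(φ,ψ)` of the tangent lines `ℓ_φ` and `ℓ_ψ`. -/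
noncomputable def ipt (φ ψ : ℝ) : ℂ :=
  ((3 - 4 * (Real.sin φ ^ 2 - Real.sin φ ^ 2 * Real.sin ψ ^ 2 + Real.sin ψ ^ 2 +
      Real.cos φ * Real.cos ψ * Real.sin φ * Real.sin ψ) : ℝ) : ℂ) +
    ((-4 * Real.sin φ * Real.sin ψ * Real.sin (φ + ψ) : ℝ) : ℂ) * Complex.I

lemma mem_tline_iff (φ : ℝ) (w : ℂ) :
    w ∈ tline φ ↔
      (w.re - Real.cos (2 * φ)) * Real.sin φ = (w.im + Real.sin (2 * φ)) * Real.cos φ := by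
  constructor
  · rintro ⟨t, rfl⟩
    simp only [Complex.add_re, Complex.add_im, Complex.mul_re, Complex.mul_im,
      Complex.ofReal_re, Complex.ofReal_im, Complex.exp_ofReal_mul_I_re,
      Complex.exp_ofReal_mul_I_im, Real.cos_neg, Real.sin_neg]
    ring
  · intro hw
    refine ⟨(w.re - Real.cos (2 * φ)) * Real.cos φ + (w.im + Real.sin (2 * φ)) * Real.sin φ, ?_⟩
    apply Complex.ext <;>
      simp only [Complex.add_re, Complex.add_im, Complex.mul_re, Complex.mul_im,
        Complex.ofReal_re, Complex.ofReal_im, Complex.exp_ofReal_mul_I_re,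
        Complex.exp_ofReal_mul_I_im, Real.cos_neg, Real.sin_neg]
    · linear_combination (Real.sin φ) * hw +
        (-(w.re - Real.cos (2 * φ))) * Real.sin_sq_add_cos_sq φ
    · linear_combination (-(Real.cos φ)) * hw +
        (-(w.im + Real.sin (2 * φ))) * Real.sin_sq_add_cos_sq φ

theorem stmt_3 (φ ψ : ℝ) (h : ∀ k : ℤ, ψ - φ ≠ (k : ℝ) * π) :
    ipt φ ψ ∈ tline φ ∧ ipt φ ψ ∈ tline ψ ∧
      ∀ w : ℂ, w ∈ tline φ → w ∈ tline ψ → w = ipt φ ψ := by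
  have hsin : Real.sin (ψ - φ) ≠ 0 := by
    intro hs
    rw [Real.sin_eq_zero_iff] at hs
    obtain ⟨n, hn⟩ := hs
    exact h n hn.symm
  have hre : (ipt φ ψ).re = 3 - 4 * (Real.sin φ ^ 2 - Real.sin φ ^ 2 * Real.sin ψ ^ 2 +
      Real.sin ψ ^ 2 + Real.cos φ * Real.cos ψ * Real.sin φ * Real.sin ψ) := by
    simp only [ipt, Complex.add_re, Complex.mul_re, Complex.ofReal_re, Complex.ofReal_im,
      Complex.I_re, Complex.I_im]
    ring
  have him : (ipt φ ψ).im = -4 * Real.sin φ * Real.sin ψ * Real.sin (φ + ψ) := by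
    simp only [ipt, Complex.add_im, Complex.mul_im, Complex.ofReal_re, Complex.ofReal_im,
      Complex.I_re, Complex.I_im]
    ring
  have hmφ : ((ipt φ ψ).re - Real.cos (2 * φ)) * Real.sin φ =
      ((ipt φ ψ).im + Real.sin (2 * φ)) * Real.cos φ := by
    rw [hre, him, Real.cos_two_mul' , Real.sin_two_mul, Real.sin_add]
    linear_combination (-3 * Real.sin φ + 4 * Real.sin φ * Real.sin ψ ^ 2) *
      Real.sin_sq_add_cos_sq φ
  have hmψ : ((ipt φ ψ).re - Real.cos (2 * ψ)) * Real.sin ψ =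
      ((ipt φ ψ).im + Real.sin (2 * ψ)) * Real.cos ψ := by
    rw [hre, him, Real.cos_two_mul', Real.sin_two_mul, Real.sin_add]
    linear_combination (-3 * Real.sin ψ + 4 * Real.sin φ ^ 2 * Real.sin ψ) *
      Real.sin_sq_add_cos_sq ψ
  refine ⟨(mem_tline_iff φ _).2 hmφ, (mem_tline_iff ψ _).2 hmψ, ?_⟩
  intro w hwφ hwψ
  rw [mem_tline_iff] at hwφ hwψ
  have e1 : (w.re - (ipt φ ψ).re) * Real.sin φ = (w.im - (ipt φ ψ).im) * Real.cos φ := by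
    linear_combination hwφ - hmφ
  have e2 : (w.re - (ipt φ ψ).re) * Real.sin ψ = (w.im - (ipt φ ψ).im) * Real.cos ψ := by
    linear_combination hwψ - hmψ
  have hdet : Real.sin ψ * Real.cos φ - Real.cos ψ * Real.sin φ ≠ 0 := by
    rw [← Real.sin_sub]; exact hsin
  have hre' : w.re = (ipt φ ψ).re := by
    have : (w.re - (ipt φ ψ).re) * (Real.sin ψ * Real.cos φ - Real.cos ψ * Real.sin φ) = 0 := by
      linear_combination Real.cos φ * e2 - Real.cos ψ * e1
    rcases mul_eq_zero.1 this with h'' | h''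
    · linarith
    · exact absurd h'' hdet
  have him' : w.im = (ipt φ ψ).im := by
    have : (w.im - (ipt φ ψ).im) * (Real.sin ψ * Real.cos φ - Real.cos ψ * Real.sin φ) = 0 := by
      linear_combination Real.sin φ * e2 - Real.sin ψ * e1
    rcases mul_eq_zero.1 this with h'' | h''
    · linarith
    · exact absurd h'' hdet
  exact Complex.ext hre' him'
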